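/- There exists n₀ such that for all n ≥ n₀ with 5 | n there exists a family F ⊆ P(n,5) with |F| ≥ 2^{0.2n} such that for any two distinct G, G' ∈ F there is no binary tree T with leaf set V satisfying both ω_G(T) < n²/400 and ω_{G'}(T) < n²/400. -/

import Mathlib

open Finset

inductive BTree (V : Type) : Type
  | leaf : V → BTree V
  | node : BTree V → BTree V → BTree V
  deriving DecidableEq

namespace BTree

variable {V : Type} [DecidableEq V]

def leavesList : BTree V → List V
  | leaf x => [x]
  | node L R => L.leavesList ++ R.leavesList

def leaves (T : BTree V) : Finset V :=
  T.leavesList.toFinset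

def cluster : BTree V → V → V → Finset V
  | leaf x, _, _ => {x}
  | node L R, u, v =>
    if u ∈ L.leaves ∧ v ∈ L.leaves then L.cluster u v
    else if u ∈ R.leaves ∧ v ∈ R.leaves then R.cluster u v
    else (node L R).leaves

end BTree

section
variable {V : Type} [Fintype V] [DecidableEq V]

def IsHC (T : BTree V) : Prop :=
  T.leavesList.Nodup ∧ T.leaves = Finset.univ

def IsWeight (w : V → V → ℝ) : Prop :=
  (∀ u v, 0 ≤ w u v) ∧ (∀ u v, w u v = w v u) ∧ ∀ u, w u u = 0

noncomputable def cost (w : V → V → ℝ) (T : BTree V) : ℝ :=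
  (1 / 2) * ∑ u : V, ∑ v : V, w u v * ((T.cluster u v).card : ℝ)

noncomputable def optCost (w : V → V → ℝ) : ℝ :=
  sInf {c : ℝ | ∃ T : BTree V, IsHC T ∧ cost w T = c}

noncomputable def graphDist (w w' : V → V → ℝ) : ℝ :=
  (1 / 2) * ∑ u : V, ∑ v : V, |w u v - w' u v|

noncomputable def cutW (w : V → V → ℝ) (A B : Finset V) : ℝ :=
  ∑ a ∈ A, ∑ b ∈ B, w a b

def IsEdgeDP (A : (V → V → ℝ) → PMF (BTree V)) (ε : ℝ) : Prop :=
  ∀ w w' : V → V → ℝ, IsWeight w → IsWeight w' → graphDist w w' ≤ 1 →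
    ∀ S : Set (BTree V),
      (A w').toOuterMeasure S ≤ ENNReal.ofReal (Real.exp ε) * (A w).toOuterMeasure S

end

/-- The weight function of a vertex-disjoint union of `m` cycles of length 5 (all present
edges having weight 1), described by a bijection `σ` sending each vertex to a pair
(cycle index, position on the cycle). -/
def cycleW {V : Type} {m : ℕ} (σ : V ≃ Fin m × ZMod 5) : V → V → ℝ := fun u v =>
  if (σ u).1 = (σ v).1 ∧ ((σ u).2 = (σ v).2 + 1 ∨ (σ v).2 = (σ u).2 + 1) then 1 else 0

/-!
Every binary tree on `n` leaves has a subtree whose leaf set `A` is balanced,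
`n/3 ≤ |A| ≤ 2n/3`; a pair separated by `A` has its lowest common ancestor strictly above that
subtree, so its cluster has at least `2n/3` leaves. A 5-cycle split by `A` has at least two edges
leaving `A`, so a tree of cost `< n²/400` for a union of 5-cycles gives a balanced `A` splitting
fewer than `n/250` of the cycles. Call two cycle packings in conflict when one balanced `A` splits
at most `n/250` cycles of each. For a fixed packing the sets `A` splitting few of its cycles are
few (choose the split cycles, then a side for every other cycle), and since permutations of `V`
act transitively on the sets of a given size, the proportion of packings in which a fixed balanced
`A` splits few cycles is at most that count divided by `C(n, |A|)`. Hence each packing conflicts with a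
`2^{-n/5}` fraction of all packings at most, and a maximal conflict-free family has at least
`2^{n/5}` members; distinct packings in it even have distinct edge sets.
-/

lemma exists_independent_dominating {α : Type*} [Fintype α] (R : α → α → Prop)
    (hsymm : ∀ x y, R x y → R y x) (hrefl : ∀ x, R x x) :
    ∃ S : Finset α, (S : Set α).Pairwise (fun x y => ¬R x y) ∧ ∀ y, ∃ x ∈ S, R x y := by
  classical
  obtain ⟨S, hS, hmax⟩ := exists_max_image
    ({S | (S : Set α).Pairwise fun x y => ¬R x y} : Finset (Finset α)) card ⟨∅, by simp⟩
  have hSind := (mem_filter.mp hS).2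
  refine ⟨S, hSind, fun y => ?_⟩
  by_contra! hy
  have hyS : y ∉ S := fun h => hy y h (hrefl y)
  have hins : insert y S ∈ ({S | (S : Set α).Pairwise fun x y => ¬R x y} : Finset (Finset α)) := by
    rw [mem_filter, coe_insert, Set.pairwise_insert]
    exact ⟨mem_univ _, hSind, fun x hx _ => ⟨fun h => hy x hx (hsymm y x h), hy x hx⟩⟩
  have := hmax _ hins
  rw [card_insert_of_notMem hyS] at this
  omega

lemma card_filter_card_notMem_le {ι β : Type} [Fintype ι] [DecidableEq ι] [Fintype β]
    [DecidableEq β] (G : Finset β) {K : ℕ} (hK : K ≤ Fintype.card ι) :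
    #{f : ι → β | #{i | f i ∉ G} ≤ K}
      ≤ (Fintype.card ι).choose K * (Fintype.card β ^ K * #G ^ (Fintype.card ι - K)) := by
  have hcover : ({f : ι → β | #{i | f i ∉ G} ≤ K} : Finset (ι → β)) ⊆ (powersetCard K univ).biUnion
      fun P => Fintype.piFinset fun i => if i ∈ P then univ else G := by
    intro f hf
    obtain ⟨P, hP, hPK⟩ := exists_superset_card_eq (mem_filter.mp hf).2 (by simpa using hK)
    refine mem_biUnion.mpr ⟨P, mem_powersetCard.mpr ⟨subset_univ P, hPK⟩, ?_⟩
    refine Fintype.mem_piFinset.mpr fun i => ?_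
    split_ifs with hi
    · exact mem_univ _
    · by_contra hfi
      exact hi (hP (by simpa using hfi))
  have hbox : ∀ P ∈ powersetCard K (univ : Finset ι),
      #(Fintype.piFinset fun i => if i ∈ P then univ else G)
        = Fintype.card β ^ K * #G ^ (Fintype.card ι - K) := by
    intro P hP
    rw [mem_powersetCard] at hP
    simp only [Fintype.card_piFinset, apply_ite card, prod_ite, prod_const, card_univ,
      filter_mem_eq_inter, univ_inter, hP.2, filter_not, card_sdiff_of_subset hP.1]
  calc _ ≤ _ := card_le_card hcover
    _ ≤ _ := card_biUnion_le
    _ = _ := by rw [sum_congr rfl hbox, sum_const, card_powersetCard, card_univ, smul_eq_mul]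

lemma choose_add_le_two_pow_mul_choose {n a : ℕ} (h : n ≤ 3 * a) (d : ℕ) :
    n.choose (a + d) ≤ 2 ^ d * n.choose a := by
  induction d with
  | zero => simp
  | succ d ih =>
    have hstep : n.choose (a + d + 1) * (a + d + 1) ≤ 2 * n.choose (a + d) * (a + d + 1) := by
      rw [Nat.choose_succ_right_eq, mul_comm 2, mul_assoc]
      exact Nat.mul_le_mul_left _ (by omega)
    calc n.choose (a + (d + 1)) ≤ 2 * n.choose (a + d) :=
          Nat.le_of_mul_le_mul_right hstep (by omega)
      _ ≤ 2 ^ (d + 1) * n.choose a := by rw [pow_succ]; linarith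

lemma two_pow_le_succ_mul_choose_half (n : ℕ) : 2 ^ n ≤ (n + 1) * n.choose (n / 2) := by
  calc 2 ^ n = ∑ i ∈ range (n + 1), n.choose i := (Nat.sum_range_choose n).symm
    _ ≤ ∑ i ∈ range (n + 1), n.choose (n / 2) := sum_le_sum fun i _ => Nat.choose_le_middle i n
    _ = (n + 1) * n.choose (n / 2) := by rw [sum_const, card_range, smul_eq_mul]

lemma two_pow_le_mul_choose_of_balanced {n a : ℕ} (h₁ : n ≤ 3 * a) (h₂ : 3 * a ≤ 2 * n) :
    2 ^ n ≤ (n + 1) * 2 ^ (n / 6) * n.choose a := by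
  obtain ⟨b, hb₁, hb₂, hba⟩ : ∃ b, n ≤ 3 * b ∧ 2 * b ≤ n ∧ n.choose b = n.choose a := by
    rcases le_total (2 * a) n with h | h
    · exact ⟨a, h₁, h, rfl⟩
    · exact ⟨n - a, by omega, by omega, Nat.choose_symm (by omega)⟩
  have hmid := choose_add_le_two_pow_mul_choose hb₁ (n / 2 - b)
  rw [show b + (n / 2 - b) = n / 2 by omega, hba] at hmid
  calc 2 ^ n ≤ (n + 1) * n.choose (n / 2) := two_pow_le_succ_mul_choose_half n
    _ ≤ (n + 1) * (2 ^ (n / 2 - b) * n.choose a) := Nat.mul_le_mul_left _ hmid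
    _ ≤ (n + 1) * (2 ^ (n / 6) * n.choose a) :=
        Nat.mul_le_mul_left _ (Nat.mul_le_mul_right _ (Nat.pow_le_pow_right two_pos (by omega)))
    _ = _ := by ring

lemma choose_mul_four_pow_le {m K : ℕ} (hK : K ≤ m) : m.choose K * 4 ^ (m - K) ≤ 5 ^ m := by
  calc m.choose K * 4 ^ (m - K) = 4 ^ (m - K) * 1 ^ (m - (m - K)) * m.choose (m - K) := by
        rw [one_pow, mul_one, Nat.choose_symm hK, mul_comm]
    _ ≤ ∑ j ∈ range (m + 1), 4 ^ j * 1 ^ (m - j) * m.choose j :=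
        single_le_sum (f := fun j => 4 ^ j * 1 ^ (m - j) * m.choose j) (fun j _ => Nat.zero_le _)
          (mem_range.mpr (by omega))
    _ = (4 + 1) ^ m := by rw [add_pow]; simp only [Nat.cast_id]

lemma five_pow_le (m : ℕ) : 5 ^ m ≤ 2 ^ (7 * (m / 3) + 5) := by
  have hr : 5 ^ (m % 3) ≤ 2 ^ 5 :=
    (Nat.pow_le_pow_right (by norm_num) (Nat.le_of_lt_succ (Nat.mod_lt m (by norm_num)))).trans
      (by norm_num)
  calc 5 ^ m = (5 ^ 3) ^ (m / 3) * 5 ^ (m % 3) := by rw [← pow_mul, ← pow_add, Nat.div_add_mod]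
    _ ≤ (2 ^ 7) ^ (m / 3) * 2 ^ 5 := Nat.mul_le_mul (Nat.pow_le_pow_left (by norm_num) _) hr
    _ = 2 ^ (7 * (m / 3) + 5) := by rw [← pow_mul, ← pow_add]

lemma packing_count_bound {m : ℕ} (hm : 1000 ≤ m) :
    (m.choose (m / 50) * (32 ^ (m / 50) * 2 ^ (m - m / 50))) ^ 2 *
      ((5 * m + 1) * 2 ^ (5 * m / 6)) * 2 ^ m ≤ 2 ^ (5 * m) := by
  set K := m / 50
  have hC : m.choose K * 4 ^ (m - K) ≤ 2 ^ (7 * (m / 3) + 5) :=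
    (choose_mul_four_pow_le (Nat.div_le_self m 50)).trans (five_pow_le m)
  have hlin : 5 * m + 1 ≤ 2 ^ (m / 10 + 6) := by
    have := Nat.lt_two_pow_self (n := m / 10)
    rw [pow_add]
    omega
  refine Nat.le_of_mul_le_mul_right (c := 4 ^ (m - K)) ?_ (by positivity)
  calc (m.choose K * (32 ^ K * 2 ^ (m - K))) ^ 2 * ((5 * m + 1) * 2 ^ (5 * m / 6)) * 2 ^ m
        * 4 ^ (m - K)
      = (m.choose K * 4 ^ (m - K)) ^ 2 * (5 * m + 1) * 2 ^ (10 * K + 5 * m / 6 + m) := by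
        rw [show (32 : ℕ) = 2 ^ 5 by norm_num, show (4 : ℕ) = 2 ^ 2 by norm_num]
        simp only [← pow_mul, pow_add]
        ring
    _ ≤ (2 ^ (7 * (m / 3) + 5)) ^ 2 * 2 ^ (m / 10 + 6) * 2 ^ (10 * K + 5 * m / 6 + m) := by
        gcongr
    _ = 2 ^ (2 * (7 * (m / 3) + 5) + (m / 10 + 6) + (10 * K + 5 * m / 6 + m)) := by
        rw [← pow_mul, ← pow_add, ← pow_add, mul_comm]
    -- per unit of `m` the exponents are `14/3 + 12/50 + 1/10 + 5/6 + 1 < 7`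
    _ ≤ 2 ^ (5 * m + 2 * (m - K)) := Nat.pow_le_pow_right two_pos (by omega)
    _ = 2 ^ (5 * m) * 4 ^ (m - K) := by rw [pow_add, pow_mul 2 2]; norm_num

namespace BTree

variable {V : Type} {L R : BTree V} {u v : V}

lemma nodup_left (h : (node L R).leavesList.Nodup) : L.leavesList.Nodup :=
  (List.nodup_append.mp h).1

lemma nodup_node_comm (h : (node L R).leavesList.Nodup) : (node R L).leavesList.Nodup :=
  List.nodup_append_comm.mp h

variable [DecidableEq V]

lemma leaves_node (L R : BTree V) : (node L R).leaves = L.leaves ∪ R.leaves := by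
  simp [leaves, leavesList, List.toFinset_append]

lemma leaves_node_comm (L R : BTree V) : (node L R).leaves = (node R L).leaves := by
  rw [leaves_node, leaves_node, union_comm]

lemma disjoint_leaves (h : (node L R).leavesList.Nodup) : Disjoint L.leaves R.leaves :=
  List.disjoint_toFinset_iff_disjoint.mpr (List.nodup_append'.mp h).2.2

lemma cluster_node_of_mem_left (hu : u ∈ L.leaves) (hv : v ∈ L.leaves) :
    (node L R).cluster u v = L.cluster u v := by
  rw [cluster, if_pos ⟨hu, hv⟩]

lemma cluster_node_of_mem_left_of_notMem (h : (node L R).leavesList.Nodup) (hu : u ∈ L.leaves)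
    (hv : v ∉ L.leaves) : (node L R).cluster u v = (node L R).leaves := by
  have huR : u ∉ R.leaves := disjoint_left.mp (disjoint_leaves h) hu
  rw [cluster, if_neg (by tauto), if_neg (by tauto)]

lemma cluster_node_comm (h : (node L R).leavesList.Nodup) (u v : V) :
    (node R L).cluster u v = (node L R).cluster u v := by
  have hLR := disjoint_left.mp (disjoint_leaves h)
  unfold cluster
  rw [leaves_node_comm]
  split_ifs <;> first | rfl | (exfalso; tauto)

lemma exists_balanced_subtree {n : ℕ} (hn : 2 ≤ n) (T : BTree V) (hT : T.leavesList.Nodup)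
    (hbig : 2 * n < 3 * #T.leaves) :
    ∃ A ⊆ T.leaves, n ≤ 3 * #A ∧ 3 * #A ≤ 2 * n ∧
      ∀ u ∈ A, ∀ v ∈ T.leaves, v ∉ A → 2 * n ≤ 3 * #(T.cluster u v) := by
  induction T with
  | leaf x => simp [leaves, leavesList] at hbig; omega
  | node L R ihL ihR =>
    wlog hLR : #R.leaves ≤ #L.leaves generalizing L R
    · obtain ⟨A, hA, h1, h2, hcl⟩ := this R L ihR ihL (nodup_node_comm hT)
        (by rwa [← leaves_node_comm]) (by omega)
      rw [← leaves_node_comm] at hA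
      refine ⟨A, hA, h1, h2, fun u hu v hv hvA => ?_⟩
      rw [← cluster_node_comm hT]
      exact hcl u hu v (by rwa [← leaves_node_comm]) hvA
    have hcard : #(node L R).leaves = #L.leaves + #R.leaves := by
      rw [leaves_node, card_union_of_disjoint (disjoint_leaves hT)]
    have hsub : L.leaves ⊆ (node L R).leaves := leaves_node L R ▸ subset_union_left
    by_cases hsmall : 3 * #L.leaves ≤ 2 * n
    · refine ⟨L.leaves, hsub, by omega, hsmall, fun u hu v _ hv => ?_⟩
      rw [cluster_node_of_mem_left_of_notMem hT hu hv]
      omega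
    · obtain ⟨A, hA, h1, h2, hcl⟩ := ihL (nodup_left hT) (by omega)
      refine ⟨A, hA.trans hsub, h1, h2, fun u hu v hv hvA => ?_⟩
      by_cases hvL : v ∈ L.leaves
      · rw [cluster_node_of_mem_left (hA hu) hvL]
        exact hcl u hu v hvL hvA
      · rw [cluster_node_of_mem_left_of_notMem hT (hA hu) hvL]
        omega

end BTree

section

variable {V : Type} [Fintype V] [DecidableEq V]

lemma mul_cutW_le_two_mul_cost {w : V → V → ℝ} (hw : ∀ u v, 0 ≤ w u v) (T : BTree V)
    {A : Finset V} {c : ℝ} (hc : ∀ u ∈ A, ∀ v ∉ A, c ≤ #(T.cluster u v)) :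
    c * cutW w A Aᶜ ≤ 2 * cost w T := by
  have hterm : ∀ u v, 0 ≤ w u v * #(T.cluster u v) :=
    fun u v => mul_nonneg (hw u v) (by positivity)
  calc c * cutW w A Aᶜ = ∑ u ∈ A, ∑ v ∈ Aᶜ, c * w u v := by simp only [cutW, mul_sum]
    _ ≤ ∑ u ∈ A, ∑ v ∈ Aᶜ, w u v * #(T.cluster u v) := by
      refine sum_le_sum fun u hu => sum_le_sum fun v hv => ?_
      rw [mul_comm c]
      exact mul_le_mul_of_nonneg_left (hc u hu v (mem_compl.mp hv)) (hw u v)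
    _ ≤ ∑ u, ∑ v, w u v * #(T.cluster u v) := by
      refine sum_le_sum_of_subset_of_nonneg (subset_univ A) (fun u _ _ => sum_nonneg
        fun v _ => hterm u v) |>.trans' (sum_le_sum fun u _ => ?_)
      exact sum_le_sum_of_subset_of_nonneg (subset_univ _) fun v _ _ => hterm u v
    _ = 2 * cost w T := by rw [cost]; ring

end

section CyclePacking

variable {V : Type} [DecidableEq V] {m : ℕ}

def cycleRow (σ : V ≃ Fin m × ZMod 5) (A : Finset V) (i : Fin m) : Finset (ZMod 5) :=
  {x | σ.symm (i, x) ∈ A}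

def splitCycles (σ : V ≃ Fin m × ZMod 5) (A : Finset V) : Finset (Fin m) :=
  {i | cycleRow σ A i ∉ ({∅, univ} : Finset (Finset (ZMod 5)))}

def crossings (s : Finset (ZMod 5)) : ℕ :=
  #{p : ZMod 5 × ZMod 5 | p.1 ∈ s ∧ p.2 ∉ s ∧ (p.1 = p.2 + 1 ∨ p.2 = p.1 + 1)}

lemma two_le_crossings {s : Finset (ZMod 5)} (hs : s ∉ ({∅, univ} : Finset _)) :
    2 ≤ crossings s := by
  revert s
  decide

lemma crossings_eq_zero {s : Finset (ZMod 5)} (hs : s ∈ ({∅, univ} : Finset _)) :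
    crossings s = 0 := by
  revert s
  decide

lemma splitCycles_trans (π : V ≃ V) (τ : V ≃ Fin m × ZMod 5) (A : Finset V) :
    splitCycles (π.trans τ) A = splitCycles τ (A.map π.toEmbedding) := by
  have hrow : ∀ i, cycleRow (π.trans τ) A i = cycleRow τ (A.map π.toEmbedding) i := by
    intro i
    ext x
    simp only [cycleRow, mem_filter, mem_univ, true_and]
    simp [mem_map_equiv]
  simp only [splitCycles, hrow]

variable [Fintype V]

lemma cutW_cycleW (σ : V ≃ Fin m × ZMod 5) (A : Finset V) :
    cutW (cycleW σ) A Aᶜ = ∑ i, (crossings (cycleRow σ A i) : ℝ) := by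
  have hind : ∀ (B : Finset V) (f : V → ℝ), ∑ b ∈ B, f b = ∑ b, if b ∈ B then f b else 0 := by
    intro B f
    rw [sum_ite_mem, univ_inter]
  rw [cutW, hind]
  conv_lhs => enter [2, a]; rw [hind Aᶜ]
  rw [← Equiv.sum_comp σ.symm]
  simp only [← Equiv.sum_comp σ.symm (fun b => ite (b ∈ Aᶜ) _ _)]
  simp only [Fintype.sum_prod_type, cycleW, Equiv.apply_symm_apply, mem_compl]
  refine sum_congr rfl fun i _ => ?_
  rw [crossings, natCast_card_filter, Fintype.sum_prod_type]
  refine sum_congr rfl fun x _ => ?_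
  -- `cycleW` vanishes between distinct cycles
  rw [Fintype.sum_eq_single i fun j hj => sum_eq_zero fun y _ => by simp [Ne.symm hj]]
  by_cases hx : σ.symm (i, x) ∈ A <;> simp [cycleRow, hx, ite_and]

lemma two_mul_card_splitCycles_le_cutW (σ : V ≃ Fin m × ZMod 5) (A : Finset V) :
    2 * (#(splitCycles σ A) : ℝ) ≤ cutW (cycleW σ) A Aᶜ := by
  rw [cutW_cycleW]
  calc 2 * (#(splitCycles σ A) : ℝ) = ∑ i ∈ splitCycles σ A, (2 : ℝ) := by
        rw [sum_const, nsmul_eq_mul, mul_comm]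
    _ ≤ ∑ i ∈ splitCycles σ A, (crossings (cycleRow σ A i) : ℝ) :=
        sum_le_sum fun i hi => by exact_mod_cast two_le_crossings (mem_filter.mp hi).2
    _ ≤ ∑ i, (crossings (cycleRow σ A i) : ℝ) :=
        sum_le_sum_of_subset_of_nonneg (subset_univ _) fun _ _ _ => by positivity

lemma cutW_cycleW_blocks (σ : V ≃ Fin m × ZMod 5) (S : Finset (Fin m)) :
    cutW (cycleW σ) ((S ×ˢ univ).map σ.symm.toEmbedding) ((S ×ˢ univ).map σ.symm.toEmbedding)ᶜ
      = 0 := by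
  rw [cutW_cycleW]
  refine sum_eq_zero fun i _ => ?_
  rw [crossings_eq_zero]
  · simp
  by_cases hi : i ∈ S <;> simp [cycleRow, hi]

def IsBalanced (A : Finset V) : Prop :=
  Fintype.card V ≤ 3 * #A ∧ 3 * #A ≤ 2 * Fintype.card V

def SharesSparseCut (K : ℕ) (σ τ : V ≃ Fin m × ZMod 5) : Prop :=
  ∃ A : Finset V, IsBalanced A ∧ #(splitCycles σ A) ≤ K ∧ #(splitCycles τ A) ≤ K

lemma SharesSparseCut.symm {K : ℕ} {σ τ : V ≃ Fin m × ZMod 5} (h : SharesSparseCut K σ τ) :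
    SharesSparseCut K τ σ :=
  let ⟨A, hA, hσ, hτ⟩ := h
  ⟨A, hA, hτ, hσ⟩

lemma sharesSparseCut_of_cycleW_eq (hm : 2 ≤ m) (K : ℕ) {σ τ : V ≃ Fin m × ZMod 5}
    (h : cycleW σ = cycleW τ) : SharesSparseCut K σ τ := by
  obtain ⟨S, -, hS⟩ := exists_subset_card_eq (s := (univ : Finset (Fin m))) (n := (m + 1) / 2)
    (by rw [card_univ, Fintype.card_fin]; omega)
  set A := (S ×ˢ univ).map σ.symm.toEmbedding
  have hA : #A = 5 * ((m + 1) / 2) := by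
    rw [card_map, card_product, hS, card_univ, ZMod.card, mul_comm]
  have hsplit : ∀ ρ : V ≃ Fin m × ZMod 5, cycleW ρ = cycleW σ → #(splitCycles ρ A) ≤ K := by
    intro ρ hρ
    have hcut := two_mul_card_splitCycles_le_cutW ρ A
    rw [hρ, cutW_cycleW_blocks] at hcut
    have : #(splitCycles ρ A) ≤ 0 := by exact_mod_cast (by linarith : (#(splitCycles ρ A) : ℝ) ≤ 0)
    omega
  refine ⟨A, ?_, hsplit σ rfl, hsplit τ h.symm⟩
  rw [IsBalanced, hA, Fintype.card_congr σ, Fintype.card_prod, Fintype.card_fin, ZMod.card]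
  omega

lemma sharesSparseCut_of_cost_lt (hn : 4000 ≤ Fintype.card V) (σ τ : V ≃ Fin m × ZMod 5)
    {T : BTree V} (hT : IsHC T) (hσ : cost (cycleW σ) T < (Fintype.card V : ℝ) ^ 2 / 400)
    (hτ : cost (cycleW τ) T < (Fintype.card V : ℝ) ^ 2 / 400) :
    SharesSparseCut (Fintype.card V / 250) σ τ := by
  set n := Fintype.card V
  have hleaves : #T.leaves = n := by rw [hT.2, card_univ]
  obtain ⟨A, -, h1, h2, hcl⟩ := T.exists_balanced_subtree (n := n) (by omega) hT.1 (by omega)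
  have hsparse : ∀ ρ : V ≃ Fin m × ZMod 5, cost (cycleW ρ) T < (n : ℝ) ^ 2 / 400 →
      #(splitCycles ρ A) ≤ n / 250 := by
    intro ρ hρ
    have hcut := mul_cutW_le_two_mul_cost (fun u v => by unfold cycleW; positivity) T
      (w := cycleW ρ) (c := 2 * n / 3) fun u hu v hv => by
        have := hcl u hu v (hT.2 ▸ mem_univ v) hv
        rw [div_le_iff₀ (by norm_num)]
        exact_mod_cast (by omega : 2 * n ≤ #(T.cluster u v) * 3)
    have hkey : (2 * n / 3 : ℝ) * (2 * #(splitCycles ρ A)) < 2 * ((n : ℝ) ^ 2 / 400) :=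
      (mul_le_mul_of_nonneg_left (two_mul_card_splitCycles_le_cutW ρ A) (by positivity)).trans_lt
        (hcut.trans_lt (by linarith))
    have hn0 : (0 : ℝ) < n := by positivity
    have hreal : (800 * #(splitCycles ρ A) : ℝ) < 3 * n := by nlinarith
    have : 800 * #(splitCycles ρ A) < 3 * n := by exact_mod_cast hreal
    omega
  exact ⟨A, ⟨h1, h2⟩, hsparse σ hσ, hsparse τ hτ⟩

lemma card_filter_splitCycles_le (σ : V ≃ Fin m × ZMod 5) {K : ℕ} (hK : K ≤ m) :
    #{A : Finset V | #(splitCycles σ A) ≤ K} ≤ m.choose K * (32 ^ K * 2 ^ (m - K)) := by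
  have hG : #({∅, univ} : Finset (Finset (ZMod 5))) = 2 := rfl
  have hinj : Set.InjOn (cycleRow σ) ({A | #(splitCycles σ A) ≤ K} : Finset (Finset V)) := by
    intro A _ B _ hAB
    ext v
    simpa [cycleRow] using congrArg (fun r => (σ v).2 ∈ r (σ v).1) hAB
  have hmaps : Set.MapsTo (cycleRow σ) ({A | #(splitCycles σ A) ≤ K} : Finset (Finset V))
      ({f : Fin m → Finset (ZMod 5) | #{i | f i ∉ ({∅, univ} : Finset _)} ≤ K} : Finset _) := by
    intro A hA
    simpa [splitCycles] using hA
  have := card_filter_card_notMem_le (ι := Fin m) ({∅, univ} : Finset (Finset (ZMod 5))) (K := K)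
    (by rwa [Fintype.card_fin])
  rw [Fintype.card_fin, Fintype.card_finset, ZMod.card, hG] at this
  exact (card_le_card_of_injOn _ hmaps hinj).trans this

lemma card_filter_splitCycles_map (π : V ≃ V) (A : Finset V) (K : ℕ) :
    #{τ : V ≃ Fin m × ZMod 5 | #(splitCycles τ (A.map π.toEmbedding)) ≤ K}
      = #{τ : V ≃ Fin m × ZMod 5 | #(splitCycles τ A) ≤ K} := by
  refine card_nbij' (π.trans ·) (π.symm.trans ·) ?_ ?_ ?_ ?_
  · intro τ hτ
    simpa [splitCycles_trans] using hτ
  · intro τ hτ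
    simpa [splitCycles_trans, map_map] using hτ
  · exact fun τ _ => Equiv.ext fun v => by simp
  · exact fun τ _ => Equiv.ext fun v => by simp

lemma card_filter_splitCycles_mul_choose_le (A : Finset V) {K : ℕ} (hK : K ≤ m) :
    #{τ : V ≃ Fin m × ZMod 5 | #(splitCycles τ A) ≤ K} * (Fintype.card V).choose #A
      ≤ Fintype.card (V ≃ Fin m × ZMod 5) * (m.choose K * (32 ^ K * 2 ^ (m - K))) := by
  have hconst : ∀ A' ∈ powersetCard #A (univ : Finset V),
      #{τ : V ≃ Fin m × ZMod 5 | #(splitCycles τ A') ≤ K}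
        = #{τ : V ≃ Fin m × ZMod 5 | #(splitCycles τ A) ≤ K} := by
    intro A' hA'
    obtain ⟨π, rfl⟩ := Equiv.Perm.exists_map_finset_eq A A' (mem_powersetCard.mp hA').2.symm
    exact card_filter_splitCycles_map π A K
  calc #{τ : V ≃ Fin m × ZMod 5 | #(splitCycles τ A) ≤ K} * (Fintype.card V).choose #A
      = ∑ A' ∈ powersetCard #A univ, #{τ : V ≃ Fin m × ZMod 5 | #(splitCycles τ A') ≤ K} := by
        rw [sum_congr rfl hconst, sum_const, card_powersetCard, card_univ, smul_eq_mul, mul_comm]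
    _ = ∑ τ : V ≃ Fin m × ZMod 5, #{A' ∈ powersetCard #A univ | #(splitCycles τ A') ≤ K} := by
        simp only [card_filter]
        exact sum_comm
    _ ≤ ∑ τ : V ≃ Fin m × ZMod 5, #{A' : Finset V | #(splitCycles τ A') ≤ K} :=
        sum_le_sum fun τ _ => card_le_card (filter_subset_filter _ (subset_univ _))
    _ ≤ ∑ τ : V ≃ Fin m × ZMod 5, m.choose K * (32 ^ K * 2 ^ (m - K)) :=
        sum_le_sum fun τ _ => card_filter_splitCycles_le τ hK
    _ = _ := by rw [sum_const, card_univ, smul_eq_mul]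

open scoped Classical in
lemma card_sharesSparseCut_mul_two_pow_le (σ : V ≃ Fin m × ZMod 5) {K : ℕ} (hK : K ≤ m) :
    #{τ | SharesSparseCut K σ τ} * 2 ^ Fintype.card V
      ≤ Fintype.card (V ≃ Fin m × ZMod 5) * ((m.choose K * (32 ^ K * 2 ^ (m - K))) ^ 2 *
          ((Fintype.card V + 1) * 2 ^ (Fintype.card V / 6))) := by
  set n := Fintype.card V
  set B := m.choose K * (32 ^ K * 2 ^ (m - K))
  set E := Fintype.card (V ≃ Fin m × ZMod 5)
  set 𝒜 : Finset (Finset V) := {A | IsBalanced A ∧ #(splitCycles σ A) ≤ K}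
  set 𝒯 : Finset V → Finset (V ≃ Fin m × ZMod 5) := fun A => {τ | #(splitCycles τ A) ≤ K}
  have hcover : ({τ | SharesSparseCut K σ τ} : Finset (V ≃ Fin m × ZMod 5)) ⊆ 𝒜.biUnion 𝒯 := by
    intro τ hτ
    obtain ⟨A, hA, hσA, hτA⟩ := (mem_filter.mp hτ).2
    exact mem_biUnion.mpr
      ⟨A, mem_filter.mpr ⟨mem_univ _, hA, hσA⟩, mem_filter.mpr ⟨mem_univ τ, hτA⟩⟩
  have hper : ∀ A ∈ 𝒜, #(𝒯 A) * 2 ^ n ≤ E * B * ((n + 1) * 2 ^ (n / 6)) := by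
    intro A hA
    have hbal := (mem_filter.mp hA).2.1
    calc #(𝒯 A) * 2 ^ n
        ≤ #(𝒯 A) * ((n + 1) * 2 ^ (n / 6) * n.choose #A) :=
          Nat.mul_le_mul_left _ (two_pow_le_mul_choose_of_balanced hbal.1 hbal.2)
      _ = #(𝒯 A) * n.choose #A * ((n + 1) * 2 ^ (n / 6)) := by ring
      _ ≤ E * B * ((n + 1) * 2 ^ (n / 6)) :=
          Nat.mul_le_mul_right _ (card_filter_splitCycles_mul_choose_le A hK)
  have h𝒜 : #𝒜 ≤ B := by
    refine le_trans (card_le_card fun A hA => ?_) (card_filter_splitCycles_le σ hK)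
    simp only [𝒜, mem_filter] at hA ⊢
    exact ⟨hA.1, hA.2.2⟩
  calc #{τ | SharesSparseCut K σ τ} * 2 ^ n
      ≤ (∑ A ∈ 𝒜, #(𝒯 A)) * 2 ^ n :=
        Nat.mul_le_mul_right _ ((card_le_card hcover).trans card_biUnion_le)
    _ = ∑ A ∈ 𝒜, #(𝒯 A) * 2 ^ n := sum_mul _ _ _
    _ ≤ ∑ A ∈ 𝒜, E * B * ((n + 1) * 2 ^ (n / 6)) := sum_le_sum hper
    _ ≤ B * (E * B * ((n + 1) * 2 ^ (n / 6))) := by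
        rw [sum_const, smul_eq_mul]; exact Nat.mul_le_mul_right _ h𝒜
    _ = E * (B ^ 2 * ((n + 1) * 2 ^ (n / 6))) := by ring

lemma exists_large_pairwise_not_sharesSparseCut {m : ℕ} (hm : 1000 ≤ m) (hV : Fintype.card V = 5 * m) :
    ∃ S : Finset (V ≃ Fin m × ZMod 5),
      (S : Set (V ≃ Fin m × ZMod 5)).Pairwise
        (fun σ τ => ¬SharesSparseCut (Fintype.card V / 250) σ τ) ∧ 2 ^ m ≤ #S := by
  classical
  set K := Fintype.card V / 250
  obtain ⟨S, hS, hdom⟩ := exists_independent_dominating (SharesSparseCut (V := V) (m := m) K)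
    (fun _ _ h => h.symm) (fun _ => sharesSparseCut_of_cycleW_eq (by omega) K rfl)
  refine ⟨S, hS, ?_⟩
  set E := Fintype.card (V ≃ Fin m × ZMod 5)
  set X := (m.choose K * (32 ^ K * 2 ^ (m - K))) ^ 2 * ((5 * m + 1) * 2 ^ (5 * m / 6))
  have hE : 0 < E := Fintype.card_pos_iff.mpr
    ⟨Fintype.equivOfCardEq (by rw [hV, Fintype.card_prod, Fintype.card_fin, ZMod.card, mul_comm])⟩
  have hcover : E ≤ ∑ σ ∈ S, #{τ | SharesSparseCut K σ τ} := by
    refine (card_le_card fun τ _ => ?_).trans card_biUnion_le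
    obtain ⟨σ, hσ, hστ⟩ := hdom τ
    exact mem_biUnion.mpr ⟨σ, hσ, mem_filter.mpr ⟨mem_univ τ, hστ⟩⟩
  have hcount : E * 2 ^ (5 * m) ≤ #S * (E * X) := calc
    E * 2 ^ (5 * m) ≤ (∑ σ ∈ S, #{τ | SharesSparseCut K σ τ}) * 2 ^ (5 * m) :=
        Nat.mul_le_mul_right _ hcover
    _ = ∑ σ ∈ S, #{τ | SharesSparseCut K σ τ} * 2 ^ (5 * m) := sum_mul _ _ _
    _ ≤ ∑ σ ∈ S, E * X := sum_le_sum fun σ _ => by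
        simpa [hV] using card_sharesSparseCut_mul_two_pow_le σ (K := K) (by omega)
    _ = #S * (E * X) := by rw [sum_const, smul_eq_mul]
  have hX : X * 2 ^ m ≤ 2 ^ (5 * m) := by
    have hK : K = m / 50 := by omega
    have := packing_count_bound hm
    rwa [← hK] at this
  refine Nat.le_of_mul_le_mul_left (c := E * 2 ^ (5 * m)) ?_ (by positivity)
  calc E * 2 ^ (5 * m) * 2 ^ m ≤ #S * (E * X) * 2 ^ m := Nat.mul_le_mul_right _ hcount
    _ = #S * E * (X * 2 ^ m) := by ring
    _ ≤ #S * E * 2 ^ (5 * m) := Nat.mul_le_mul_left _ hX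
    _ = E * 2 ^ (5 * m) * #S := by ring

end CyclePacking

/-- For all large enough `n` divisible by 5 there is a family
`F ⊆ P(n,5)` with `|F| ≥ 2^{0.2n}` such that no binary tree with leaf set `V` has Dasgupta
cost below `n²/400` on two distinct members of `F`. -/
theorem packing_family :
    ∃ n₀ : ℕ, ∀ n : ℕ, n₀ ≤ n → 5 ∣ n →
      ∀ (V : Type) [Fintype V] [DecidableEq V], Fintype.card V = n →
        ∃ F : Set (V → V → ℝ),
          F ⊆ {w | ∃ σ : V ≃ Fin (n / 5) × ZMod 5, w = cycleW σ} ∧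
          (2 : ℝ) ^ ((0.2 : ℝ) * (n : ℝ)) ≤ (Nat.card F : ℝ) ∧
          ∀ w ∈ F, ∀ w' ∈ F, w ≠ w' →
            ¬∃ T : BTree V, IsHC T ∧
              cost w T < (n : ℝ) ^ 2 / 400 ∧ cost w' T < (n : ℝ) ^ 2 / 400 := by
  refine ⟨5000, fun n hn h5 V _ _ hV => ?_⟩
  obtain ⟨S, hS, hcard⟩ := exists_large_pairwise_not_sharesSparseCut (V := V) (m := n / 5) (by omega) (by omega)
  have hinj : Set.InjOn cycleW (S : Set (V ≃ Fin (n / 5) × ZMod 5)) := fun σ hσ τ hτ h =>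
    by_contra fun hne => hS hσ hτ hne (sharesSparseCut_of_cycleW_eq (by omega) _ h)
  refine ⟨cycleW '' (S : Set (V ≃ Fin (n / 5) × ZMod 5)), ?_, ?_, ?_⟩
  · rintro _ ⟨σ, -, rfl⟩
    exact ⟨σ, rfl⟩
  · rw [Nat.card_coe_set_eq, hinj.ncard_image, Set.ncard_coe_finset,
      show (0.2 : ℝ) * n = (n / 5 : ℕ) by rw [Nat.cast_div h5 (by norm_num)]; norm_num; ring,
      Real.rpow_natCast]
    exact_mod_cast hcard
  · rintro _ ⟨σ, hσ, rfl⟩ _ ⟨τ, hτ, rfl⟩ hne ⟨T, hT, hσT, hτT⟩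
    subst hV
    exact hS hσ hτ (fun h => hne (h ▸ rfl)) (sharesSparseCut_of_cost_lt (by omega) σ τ hT hσT hτT)
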